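/- (case D_n(i) of Theorem 6.4) Let n ≥ 6 and 3 ≤ i ≤ n−3, and set δ = −(n − i − 1)λ_i + ρ_D. Then the sequence (e_{n−1} − e_n, e_i − e_{n−1}) links −(e_{n−1} + e_n) + δ to −2e_i + δ. Explicitly: ⟨−(e_{n−1} + e_n) + δ, (e_{n−1} − e_n)^∨⟩ = 1, then ⟨s_{e_{n−1}−e_n}(−(e_{n−1} + e_n) + δ), (e_i − e_{n−1})^∨⟩ = 2, and s_{e_i − e_{n−1}} s_{e_{n−1} − e_n}(−(e_{n−1} + e_n) + δ) = −2e_i + δ. (By Lepowsky's criterion this shows the standard map between the generalized Verma modules arising from the Ω_2 system for V(μ+ε_γ) of type D_n(i) is zero, so φ_{Ω2} is non-standard.) -/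

import Mathlib

open scoped RealInnerProductSpace

noncomputable section

/-- The standard basis vector `e_j` of `ℝ^n`, with 1-based index `1 ≤ j ≤ n`. -/
def E (n j : ℕ) : EuclideanSpace ℝ (Fin n) :=
  if h : 1 ≤ j ∧ j ≤ n then EuclideanSpace.single (⟨j - 1, by omega⟩ : Fin n) 1 else 0

/-- The coroot `β^∨ = 2β/⟨β,β⟩`. -/
def coroot {n : ℕ} (β : EuclideanSpace ℝ (Fin n)) : EuclideanSpace ℝ (Fin n) :=
  (2 / ⟪β, β⟫) • β

/-- The reflection `s_β(v) = v − ⟨v, β^∨⟩ β`. -/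
def sRefl {n : ℕ} (β v : EuclideanSpace ℝ (Fin n)) : EuclideanSpace ℝ (Fin n) :=
  v - ⟪v, coroot β⟫ • β

/-- The fundamental weight `λ_i = e_1 + ⋯ + e_i`. -/
def lambdaF (n i : ℕ) : EuclideanSpace ℝ (Fin n) := ∑ j ∈ Finset.Icc 1 i, E n j

/-- Half the sum of the positive roots of type `B_n`: `ρ = Σ_{j=1}^n (n − j + 1/2) e_j`. -/
def rhoB (n : ℕ) : EuclideanSpace ℝ (Fin n) :=
  ∑ j ∈ Finset.Icc 1 n, ((n : ℝ) - (j : ℝ) + 1 / 2) • E n j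

/-- `δ(i) = −(n − i − 1/2)λ_i + ρ`. -/
def deltaB (n i : ℕ) : EuclideanSpace ℝ (Fin n) :=
  (-((n : ℝ) - (i : ℝ) - 1 / 2)) • lambdaF n i + rhoB n

/-- Half the sum of the positive roots of type `D_n`: `ρ_D = Σ_{j=1}^n (n − j) e_j`. -/
def rhoD (n : ℕ) : EuclideanSpace ℝ (Fin n) :=
  ∑ j ∈ Finset.Icc 1 n, ((n : ℝ) - (j : ℝ)) • E n j

/-- `δ = −(n − i − 1)λ_i + ρ_D`. -/
def deltaD (n i : ℕ) : EuclideanSpace ℝ (Fin n) :=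
  (-((n : ℝ) - (i : ℝ) - 1)) • lambdaF n i + rhoD n

/-- `Links (β_1, …, β_m) δ λ`: with `δ_0 = δ`, `δ_t = s_{β_t}(δ_{t−1})`, one has
`δ_m = λ` and `⟨δ_{t−1}, β_t^∨⟩ ∈ ℤ_{≥0}` for every `t`. -/
inductive Links {n : ℕ} :
    List (EuclideanSpace ℝ (Fin n)) → EuclideanSpace ℝ (Fin n) →
      EuclideanSpace ℝ (Fin n) → Prop
  | nil (δ : EuclideanSpace ℝ (Fin n)) : Links [] δ δ
  | cons {β : EuclideanSpace ℝ (Fin n)} {βs : List (EuclideanSpace ℝ (Fin n))}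
      {δ lam : EuclideanSpace ℝ (Fin n)} (c : ℕ)
      (hc : ⟪δ, coroot β⟫ = (c : ℝ)) (h : Links βs (sRefl β δ) lam) :
      Links (β :: βs) δ lam

/-! Both reflecting vectors are roots of squared length `2`, so each coroot is the root itself
and the reflections are `v ↦ v - ⟪v, α⟫ α`. Everything then reduces to the pairings
`⟪δ, e_j⟫`, which are `i - j + 1` for `j ≤ i` and `n - j` for `j > i`; as `i < n - 1` this gives
`⟪δ, e_i⟫ = ⟪δ, e_{n-1}⟫ = 1` and `⟪δ, e_n⟫ = 0`, whence the pairings `1` and `2` and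
`s_β s_α (-(e_{n-1} + e_n) + δ) = -2e_{n-1} + δ - 2(e_i - e_{n-1}) = -2e_i + δ`. -/

section Basis

variable {n : ℕ}

lemma inner_E_self {j : ℕ} (hj1 : 1 ≤ j) (hjn : j ≤ n) : ⟪E n j, E n j⟫ = 1 := by
  simp [E, dif_pos (And.intro hj1 hjn)]

lemma inner_E_of_ne {j k : ℕ} (hjk : j ≠ k) : ⟪E n j, E n k⟫ = 0 := by
  unfold E
  split_ifs with hj hk hk
  · rw [EuclideanSpace.inner_single_left, PiLp.single_apply,
      if_neg (by rw [Fin.mk.injEq]; omega), mul_zero]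
  all_goals simp

lemma inner_self_E_sub_E {j k : ℕ} (hj1 : 1 ≤ j) (hjn : j ≤ n) (hk1 : 1 ≤ k) (hkn : k ≤ n)
    (hjk : j ≠ k) : ⟪E n j - E n k, E n j - E n k⟫ = 2 := by
  rw [inner_sub_left, inner_sub_right, inner_sub_right, inner_E_self hj1 hjn,
    inner_E_self hk1 hkn, inner_E_of_ne hjk, inner_E_of_ne hjk.symm]
  norm_num

lemma inner_sum_smul_E (s : Finset ℕ) (f : ℕ → ℝ) {j : ℕ} (hj1 : 1 ≤ j) (hjn : j ≤ n) :
    ⟪∑ k ∈ s, f k • E n k, E n j⟫ = if j ∈ s then f j else 0 := by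
  rw [sum_inner, ← Finset.sum_ite_eq' s j f]
  refine Finset.sum_congr rfl fun k _ => ?_
  rw [real_inner_smul_left]
  by_cases hkj : k = j
  · rw [hkj, inner_E_self hj1 hjn, if_pos rfl, mul_one]
  · rw [inner_E_of_ne hkj, if_neg hkj, mul_zero]

end Basis

section Pairings

variable {n i j : ℕ}

lemma inner_lambdaF_E (hj1 : 1 ≤ j) (hjn : j ≤ n) :
    ⟪lambdaF n i, E n j⟫ = if j ≤ i then 1 else 0 := by
  simpa [lambdaF, hj1] using inner_sum_smul_E (Finset.Icc 1 i) (fun _ => 1) hj1 hjn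

lemma inner_rhoD_E (hj1 : 1 ≤ j) (hjn : j ≤ n) : ⟪rhoD n, E n j⟫ = n - j := by
  simpa [rhoD, hj1, hjn] using
    inner_sum_smul_E (Finset.Icc 1 n) (fun k => (n : ℝ) - k) hj1 hjn

lemma inner_deltaD_E_of_le (hj1 : 1 ≤ j) (hji : j ≤ i) (hjn : j ≤ n) :
    ⟪deltaD n i, E n j⟫ = i - j + 1 := by
  rw [deltaD, inner_add_left, real_inner_smul_left, inner_lambdaF_E hj1 hjn, if_pos hji,
    inner_rhoD_E hj1 hjn]
  ring

lemma inner_deltaD_E_of_lt (hij : i < j) (hjn : j ≤ n) :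
    ⟪deltaD n i, E n j⟫ = n - j := by
  rw [deltaD, inner_add_left, real_inner_smul_left, inner_lambdaF_E (by omega) hjn,
    if_neg (by omega), inner_rhoD_E (by omega) hjn]
  ring

end Pairings

section Reflection

variable {n : ℕ} {β v : EuclideanSpace ℝ (Fin n)}

lemma coroot_of_inner_self_eq_two (hβ : ⟪β, β⟫ = 2) : coroot β = β := by
  rw [coroot, hβ, div_self two_ne_zero, one_smul]

lemma sRefl_of_inner_self_eq_two (hβ : ⟪β, β⟫ = 2) : sRefl β v = v - ⟪v, β⟫ • β := by
  rw [sRefl, coroot_of_inner_self_eq_two hβ]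

end Reflection

section Chain

variable {n i : ℕ}

lemma inner_self_E_pred_sub_E_last (hn : 2 ≤ n) :
    ⟪E n (n - 1) - E n n, E n (n - 1) - E n n⟫ = 2 :=
  inner_self_E_sub_E (by omega) (by omega) (by omega) le_rfl (by omega)

lemma inner_self_E_sub_E_pred (hi : 1 ≤ i) (hin : i + 2 ≤ n) :
    ⟪E n i - E n (n - 1), E n i - E n (n - 1)⟫ = 2 :=
  inner_self_E_sub_E hi (by omega) (by omega) (by omega) (by omega)

lemma inner_deltaD_sub_E_pred_add_E_last (hin : i + 2 ≤ n) :
    ⟪-(E n (n - 1) + E n n) + deltaD n i, E n (n - 1) - E n n⟫ = 1 := by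
  simp (disch := omega) only [inner_add_left, inner_neg_left, inner_sub_right, inner_E_self,
    inner_E_of_ne, inner_deltaD_E_of_lt, Nat.cast_pred]
  ring

lemma sRefl_deltaD_sub_E_pred_add_E_last (hin : i + 2 ≤ n) :
    sRefl (E n (n - 1) - E n n) (-(E n (n - 1) + E n n) + deltaD n i) =
      -((2 : ℝ) • E n (n - 1)) + deltaD n i := by
  rw [sRefl_of_inner_self_eq_two (inner_self_E_pred_sub_E_last (by omega)),
    inner_deltaD_sub_E_pred_add_E_last hin]
  module

lemma inner_deltaD_sub_two_E_pred (hi : 1 ≤ i) (hin : i + 2 ≤ n) :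
    ⟪-((2 : ℝ) • E n (n - 1)) + deltaD n i, E n i - E n (n - 1)⟫ = 2 := by
  simp (disch := omega) only [inner_add_left, inner_neg_left, inner_sub_right,
    real_inner_smul_left, inner_E_self, inner_E_of_ne, inner_deltaD_E_of_le,
    inner_deltaD_E_of_lt, Nat.cast_pred]
  ring

lemma sRefl_deltaD_sub_two_E_pred (hi : 1 ≤ i) (hin : i + 2 ≤ n) :
    sRefl (E n i - E n (n - 1)) (-((2 : ℝ) • E n (n - 1)) + deltaD n i) =
      -((2 : ℝ) • E n i) + deltaD n i := by
  rw [sRefl_of_inner_self_eq_two (inner_self_E_sub_E_pred hi hin),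
    inner_deltaD_sub_two_E_pred hi hin]
  module

end Chain

theorem link_for_Dni_gamma_general (n i : ℕ) (hi1 : 3 ≤ i) (hi2 : i ≤ n - 3) :
    Links [E n (n - 1) - E n n, E n i - E n (n - 1)]
      (-(E n (n - 1) + E n n) + deltaD n i)
      (-((2 : ℝ) • E n i) + deltaD n i) ∧
    ⟪-(E n (n - 1) + E n n) + deltaD n i, coroot (E n (n - 1) - E n n)⟫ = 1 ∧
    ⟪sRefl (E n (n - 1) - E n n) (-(E n (n - 1) + E n n) + deltaD n i),
        coroot (E n i - E n (n - 1))⟫ = 2 ∧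
    sRefl (E n i - E n (n - 1))
        (sRefl (E n (n - 1) - E n n) (-(E n (n - 1) + E n n) + deltaD n i)) =
      -((2 : ℝ) • E n i) + deltaD n i := by
  have hi : 1 ≤ i := by omega
  have hin : i + 2 ≤ n := by omega
  have hc₁ : ⟪-(E n (n - 1) + E n n) + deltaD n i, coroot (E n (n - 1) - E n n)⟫ = 1 := by
    rw [coroot_of_inner_self_eq_two (inner_self_E_pred_sub_E_last (by omega)),
      inner_deltaD_sub_E_pred_add_E_last hin]
  have hc₂ : ⟪sRefl (E n (n - 1) - E n n) (-(E n (n - 1) + E n n) + deltaD n i),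
      coroot (E n i - E n (n - 1))⟫ = 2 := by
    rw [coroot_of_inner_self_eq_two (inner_self_E_sub_E_pred hi hin),
      sRefl_deltaD_sub_E_pred_add_E_last hin, inner_deltaD_sub_two_E_pred hi hin]
  have hs : sRefl (E n i - E n (n - 1))
      (sRefl (E n (n - 1) - E n n) (-(E n (n - 1) + E n n) + deltaD n i)) =
      -((2 : ℝ) • E n i) + deltaD n i := by
    rw [sRefl_deltaD_sub_E_pred_add_E_last hin, sRefl_deltaD_sub_two_E_pred hi hin]
  refine ⟨.cons 1 (by rw [hc₁, Nat.cast_one]) (.cons 2 (by rw [hc₂, Nat.cast_ofNat]) ?_),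
    hc₁, hc₂, hs⟩
  exact hs ▸ .nil _

/-- case `D_n(i)` of Theorem 6.4: with `δ = −(n − i − 1)λ_i + ρ_D`, the
sequence `(e_{n−1} − e_n, e_i − e_{n−1})` links `−(e_{n−1} + e_n) + δ` to `−2e_i + δ`,
with the explicit pairings `1` and `2` along the way. -/
theorem link_for_Dni_gamma (n i : ℕ) (hn : 6 ≤ n) (hi1 : 3 ≤ i) (hi2 : i ≤ n - 3) :
    Links [E n (n - 1) - E n n, E n i - E n (n - 1)]
      (-(E n (n - 1) + E n n) + deltaD n i)
      (-((2 : ℝ) • E n i) + deltaD n i) ∧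
    ⟪-(E n (n - 1) + E n n) + deltaD n i, coroot (E n (n - 1) - E n n)⟫ = 1 ∧
    ⟪sRefl (E n (n - 1) - E n n) (-(E n (n - 1) + E n n) + deltaD n i),
        coroot (E n i - E n (n - 1))⟫ = 2 ∧
    sRefl (E n i - E n (n - 1))
        (sRefl (E n (n - 1) - E n n) (-(E n (n - 1) + E n n) + deltaD n i)) =
      -((2 : ℝ) • E n i) + deltaD n i :=
  link_for_Dni_gamma_general n i hi1 hi2

end
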